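/- arXiv:1602.07951 — 2 statements merged into one kernel-verified Lean document; each statement's English description precedes it below -/
import Mathlib

section
/- Define K₊^d = e^{iφ}(cos θ ∂_θ + i(1/sin θ + sin θ) ∂_φ - d sin θ), K₋^d = e^{-iφ}(-cos θ ∂_θ + i(1/sin θ + sin θ) ∂_φ - (d-1) sin θ), and K_z = -i ∂_φ, acting on smooth functions of (θ,φ). Then for every real d and every smooth f, the commutator identity [K₊^d, K₋^d] f = (-8 K_z - (4d - 2)) f holds wherever sin θ ≠ 0. -/
noncomputable def pT (f : ℝ × ℝ → ℂ) (p : ℝ × ℝ) : ℂ := fderiv ℝ f p (1, 0)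
noncomputable def pP (f : ℝ × ℝ → ℂ) (p : ℝ × ℝ) : ℂ := fderiv ℝ f p (0, 1)

noncomputable def Lplus (f : ℝ × ℝ → ℂ) (p : ℝ × ℝ) : ℂ :=
  Complex.exp (Complex.I * (p.2 : ℂ)) *
    (pT f p + Complex.I * ((Real.cos p.1 / Real.sin p.1 : ℝ) : ℂ) * pP f p)

noncomputable def Lminus (f : ℝ × ℝ → ℂ) (p : ℝ × ℝ) : ℂ :=
  Complex.exp (-Complex.I * (p.2 : ℂ)) *
    (-pT f p + Complex.I * ((Real.cos p.1 / Real.sin p.1 : ℝ) : ℂ) * pP f p)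

noncomputable def Lz (f : ℝ × ℝ → ℂ) (p : ℝ × ℝ) : ℂ := -Complex.I * pP f p
noncomputable def Kplus (d : ℝ) (f : ℝ × ℝ → ℂ) (p : ℝ × ℝ) : ℂ :=
  Complex.exp (Complex.I * (p.2 : ℂ)) *
    ((Real.cos p.1 : ℂ) * pT f p +
      Complex.I * ((1 / Real.sin p.1 + Real.sin p.1 : ℝ) : ℂ) * pP f p -
      (d : ℂ) * (Real.sin p.1 : ℂ) * f p)

noncomputable def Kminus (d : ℝ) (f : ℝ × ℝ → ℂ) (p : ℝ × ℝ) : ℂ :=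
  Complex.exp (-Complex.I * (p.2 : ℂ)) *
    (-(Real.cos p.1 : ℂ) * pT f p +
      Complex.I * ((1 / Real.sin p.1 + Real.sin p.1 : ℝ) : ℂ) * pP f p -
      ((d - 1 : ℝ) : ℂ) * (Real.sin p.1 : ℂ) * f p)

noncomputable def Kz (f : ℝ × ℝ → ℂ) (p : ℝ × ℝ) : ℂ := -Complex.I * pP f p

set_option maxHeartbeats 2000000 in
theorem u11_commutator_K (d : ℝ) (f : ℝ × ℝ → ℂ) (hf : ContDiff ℝ (⊤ : ℕ∞) f)
    (p : ℝ × ℝ) (hp : Real.sin p.1 ≠ 0) :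
    Kplus d (Kminus d f) p - Kminus d (Kplus d f) p
      = -8 * Kz f p - ((4 * d - 2 : ℝ) : ℂ) * f p := by
  have hDf : Differentiable ℝ f := hf.differentiable (by simp)
  have hDF : Differentiable ℝ (fderiv ℝ f) := (hf.fderiv_right (m := 1) (by exact WithTop.coe_le_coe.mpr le_top)).differentiable one_ne_zero
  have hsymm := second_derivative_symmetric (f := f) (fun y => (hDf y).hasFDerivAt)
    (hDF p).hasFDerivAt ((1:ℝ),(0:ℝ)) ((0:ℝ),(1:ℝ))
  have key : ∀ (r : ℝ → ℝ) (r' : ℝ), HasDerivAt r r' p.1 →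
      HasFDerivAt (fun q : ℝ × ℝ => (r q.1 : ℂ))
        (Complex.ofRealCLM.comp ((ContinuousLinearMap.smulRight (1 : ℝ →L[ℝ] ℝ) r').comp
          (ContinuousLinearMap.fst ℝ ℝ ℝ))) p :=
    fun r r' h => Complex.ofRealCLM.hasFDerivAt.comp p (h.hasFDerivAt.comp p hasFDerivAt_fst)
  have hcos := key _ _ (Real.hasDerivAt_cos p.1)
  have hsin := key _ _ (Real.hasDerivAt_sin p.1)
  have hcsc := key _ _ (show HasDerivAt (fun θ => 1 / Real.sin θ + Real.sin θ)
      (-Real.cos p.1 / Real.sin p.1 ^ 2 + Real.cos p.1) p.1 by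
    simp only [one_div]; exact ((Real.hasDerivAt_sin p.1).inv hp).add (Real.hasDerivAt_sin p.1))
  have hdem : HasDerivAt (fun y : ℝ => Complex.exp (-Complex.I * y))
      (Complex.exp (-Complex.I * p.2) * -Complex.I) p.2 := by
    have h0 : HasDerivAt (fun y : ℝ => -Complex.I * (y : ℂ)) (-Complex.I) p.2 := by
      simpa using (Complex.ofRealCLM.hasDerivAt (x := p.2)).const_mul (-Complex.I)
    exact h0.cexp
  have hdep : HasDerivAt (fun y : ℝ => Complex.exp (Complex.I * y))
      (Complex.exp (Complex.I * p.2) * Complex.I) p.2 := by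
    have h0 : HasDerivAt (fun y : ℝ => Complex.I * (y : ℂ)) (Complex.I) p.2 := by
      simpa using (Complex.ofRealCLM.hasDerivAt (x := p.2)).const_mul (Complex.I)
    exact h0.cexp
  have hEm : HasFDerivAt (fun q : ℝ × ℝ => Complex.exp (-Complex.I * q.2)) _ p :=
    hdem.hasFDerivAt.comp p hasFDerivAt_snd
  have hEp : HasFDerivAt (fun q : ℝ × ℝ => Complex.exp (Complex.I * q.2)) _ p :=
    hdep.hasFDerivAt.comp p hasFDerivAt_snd
  have hfT : HasFDerivAt (fun q => fderiv ℝ f q ((1:ℝ),(0:ℝ))) _ p :=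
    (hDF p).hasFDerivAt.clm_apply (hasFDerivAt_const ((1:ℝ),(0:ℝ)) p)
  have hfP : HasFDerivAt (fun q => fderiv ℝ f q ((0:ℝ),(1:ℝ))) _ p :=
    (hDF p).hasFDerivAt.clm_apply (hasFDerivAt_const ((0:ℝ),(1:ℝ)) p)
  have hKm : HasFDerivAt (Kminus d f) _ p :=
    hEm.mul (((hcos.neg.mul hfT).add ((hcsc.const_mul Complex.I).mul hfP)).sub
      ((hsin.const_mul ((d - 1 : ℝ) : ℂ)).mul (hDf p).hasFDerivAt))
  have hKp : HasFDerivAt (Kplus d f) _ p :=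
    hEp.mul (((hcos.mul hfT).add ((hcsc.const_mul Complex.I).mul hfP)).sub
      ((hsin.const_mul ((d : ℝ) : ℂ)).mul (hDf p).hasFDerivAt))
  have e1 : pT (Kminus d f) p = fderiv ℝ (Kminus d f) p (1,0) := rfl
  have e2 : pP (Kminus d f) p = fderiv ℝ (Kminus d f) p (0,1) := rfl
  have e3 : pT (Kplus d f) p = fderiv ℝ (Kplus d f) p (1,0) := rfl
  have e4 : pP (Kplus d f) p = fderiv ℝ (Kplus d f) p (0,1) := rfl
  rw [hKm.fderiv] at e1 e2
  rw [hKp.fderiv] at e3 e4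
  simp [pT, pP] at e1 e2 e3 e4
  have hS : Complex.sin (p.1 : ℂ) ≠ 0 := by
    rw [← Complex.ofReal_sin]; exact_mod_cast hp
  simp only [Kplus, Kminus, Kz, pT, pP]
  rw [e1, e2, e3, e4, hsymm]
  push_cast
  simp only [neg_mul, one_div, div_eq_mul_inv, ← inv_pow]
  set S := Complex.sin (p.1 : ℂ) with hSdef
  set C := Complex.cos (p.1 : ℂ) with hCdef
  set V := S⁻¹ with hVdef
  set E := Complex.exp (Complex.I * (p.2 : ℂ)) with hEdef
  set Ep := Complex.exp (-(Complex.I * (p.2 : ℂ))) with hEpdef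
  have hE : E * Ep = 1 := by
    rw [hEdef, hEpdef, ← Complex.exp_add]
    simp
  have hSV : S * V = 1 := mul_inv_cancel₀ hS
  have hI : Complex.I ^ 2 = -1 := Complex.I_sq
  have hP : S ^ 2 + C ^ 2 = 1 := Complex.sin_sq_add_cos_sq _
  set u := f p with hu
  set uP := fderiv ℝ f p ((0:ℝ),(1:ℝ)) with huP
  linear_combination
    (C^2*u - 2*C^2*u*(d:ℂ) + 2*C^2*Complex.I*uP - 2*V^2*Complex.I^3*uP
      - 2*V^2*C^2*Complex.I*uP - S*V*Complex.I^2*u + 2*S*V*Complex.I^2*u*(d:ℂ)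
      - 4*S*V*Complex.I^3*uP - S^2*Complex.I^2*u + 2*S^2*Complex.I^2*u*(d:ℂ)
      - 2*S^2*Complex.I^3*uP) * hE
    + (2*Complex.I*uP - Complex.I^2*u + 2*Complex.I^2*u*(d:ℂ) - 4*Complex.I^3*uP
      + 2*S*V*Complex.I*uP) * hSV
    + (-u + 2*u*(d:ℂ) - 4*Complex.I*uP - 2*V^2*Complex.I*uP - S^2*u
      + 2*S^2*u*(d:ℂ) - 2*S^2*Complex.I*uP) * hI
    + (u - 2*u*(d:ℂ) + 2*Complex.I*uP - 2*V^2*Complex.I*uP) * hP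
end

section
/- Define I₊^s = e^{iφ}(cos θ ∂_θ + i(1/sin θ + sin θ)∂_φ + (s-1) sin θ) and I₋^s = e^{-iφ}(-cos θ ∂_θ + i(1/sin θ + sin θ)∂_φ + s sin θ), and I_z = -i ∂_φ. Then for every real s and every smooth function f of (θ,φ), [I₊^s, I₋^s] f = (-8 I_z + (4s - 2)) f wherever sin θ ≠ 0. -/
noncomputable def Iplus (s : ℝ) (f : ℝ × ℝ → ℂ) (p : ℝ × ℝ) : ℂ :=
  Complex.exp (Complex.I * (p.2 : ℂ)) *
    ((Real.cos p.1 : ℂ) * pT f p +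
      Complex.I * ((1 / Real.sin p.1 + Real.sin p.1 : ℝ) : ℂ) * pP f p +
      ((s - 1 : ℝ) : ℂ) * (Real.sin p.1 : ℂ) * f p)

noncomputable def Iminus (s : ℝ) (f : ℝ × ℝ → ℂ) (p : ℝ × ℝ) : ℂ :=
  Complex.exp (-Complex.I * (p.2 : ℂ)) *
    (-(Real.cos p.1 : ℂ) * pT f p +
      Complex.I * ((1 / Real.sin p.1 + Real.sin p.1 : ℝ) : ℂ) * pP f p +
      (s : ℂ) * (Real.sin p.1 : ℂ) * f p)

noncomputable def Iz (f : ℝ × ℝ → ℂ) (p : ℝ × ℝ) : ℂ := -Complex.I * pP f p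

section Aux
open Complex ContinuousLinearMap

noncomputable def pr1 : ℝ×ℝ →L[ℝ] ℂ := Complex.ofRealCLM.comp (ContinuousLinearMap.fst ℝ ℝ ℝ)
noncomputable def pr2 : ℝ×ℝ →L[ℝ] ℂ := Complex.ofRealCLM.comp (ContinuousLinearMap.snd ℝ ℝ ℝ)
@[simp] lemma pr1_apply (v : ℝ×ℝ) : pr1 v = (v.1 : ℂ) := rfl
@[simp] lemma pr2_apply (v : ℝ×ℝ) : pr2 v = (v.2 : ℂ) := rfl

lemma hasF_exp (a : ℂ) (p : ℝ×ℝ) :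
    HasFDerivAt (fun q : ℝ×ℝ => Complex.exp (a * q.2)) ((a * Complex.exp (a * p.2)) • pr2) p := by
  have hN : HasFDerivAt (fun q : ℝ×ℝ => a * (q.2 : ℂ)) (a • pr2) p := by
    have h := (a • pr2).hasFDerivAt (x := p)
    have e : ⇑(a • pr2) = (fun q : ℝ×ℝ => a * (q.2 : ℂ)) := by
      funext q; simp [pr2, smul_eq_mul]
    rwa [e] at h
  have he : HasFDerivAt Complex.exp
      ((Complex.exp (a * p.2) • (1 : ℂ →L[ℂ] ℂ)).restrictScalars ℝ) (a * p.2) :=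
    ((Complex.hasDerivAt_exp (a * p.2)).hasFDerivAt.congr_fderiv
      (by ext z; simp [mul_comm])).restrictScalars ℝ
  refine ((he.comp p hN).congr_fderiv ?_)
  ext w <;> simp [smul_eq_mul] <;> ring

lemma hasF_sin (p : ℝ×ℝ) :
    HasFDerivAt (fun q : ℝ×ℝ => ((Real.sin q.1 : ℝ) : ℂ)) (((Real.cos p.1 : ℝ) : ℂ) • pr1) p := by
  have h1 : HasFDerivAt (fun q : ℝ×ℝ => Real.sin q.1)
      ((Real.cos p.1) • (ContinuousLinearMap.fst ℝ ℝ ℝ)) p :=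
    (Real.hasDerivAt_sin p.1).comp_hasFDerivAt p hasFDerivAt_fst
  refine (Complex.ofRealCLM.hasFDerivAt.comp p h1).congr_fderiv ?_
  ext w <;> simp [pr1]

lemma hasF_cos (p : ℝ×ℝ) :
    HasFDerivAt (fun q : ℝ×ℝ => ((Real.cos q.1 : ℝ) : ℂ)) (((-Real.sin p.1 : ℝ) : ℂ) • pr1) p := by
  have h1 : HasFDerivAt (fun q : ℝ×ℝ => Real.cos q.1)
      ((-Real.sin p.1) • (ContinuousLinearMap.fst ℝ ℝ ℝ)) p :=
    (Real.hasDerivAt_cos p.1).comp_hasFDerivAt p hasFDerivAt_fst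
  refine (Complex.ofRealCLM.hasFDerivAt.comp p h1).congr_fderiv ?_
  ext w <;> simp [pr1]

lemma hasF_cc (p : ℝ×ℝ) (hp : Real.sin p.1 ≠ 0) :
    HasFDerivAt (fun q : ℝ×ℝ => ((1 / Real.sin q.1 + Real.sin q.1 : ℝ) : ℂ))
      (((-Real.cos p.1 / (Real.sin p.1)^2 + Real.cos p.1 : ℝ) : ℂ) • pr1) p := by
  have h0 : HasDerivAt (fun t : ℝ => 1 / Real.sin t + Real.sin t)
      (-Real.cos p.1 / (Real.sin p.1)^2 + Real.cos p.1) p.1 := by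
    have hinv : HasDerivAt (fun t : ℝ => (Real.sin t)⁻¹)
        (-Real.cos p.1 / (Real.sin p.1)^2) p.1 := (Real.hasDerivAt_sin p.1).inv hp
    have := hinv.add (Real.hasDerivAt_sin p.1)
    simp only [one_div]; exact this
  have h1 : HasFDerivAt (fun q : ℝ×ℝ => 1 / Real.sin q.1 + Real.sin q.1)
      ((-Real.cos p.1 / (Real.sin p.1)^2 + Real.cos p.1) • (ContinuousLinearMap.fst ℝ ℝ ℝ)) p :=
    h0.comp_hasFDerivAt p hasFDerivAt_fst
  refine (Complex.ofRealCLM.hasFDerivAt.comp p h1).congr_fderiv ?_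
  ext w <;> simp [pr1]

lemma hasF_pD (f : ℝ×ℝ → ℂ) (hf : ContDiff ℝ (⊤ : ℕ∞) f) (w : ℝ×ℝ) (p : ℝ×ℝ) :
    HasFDerivAt (fun q => fderiv ℝ f q w)
      ((ContinuousLinearMap.apply ℝ ℂ w).comp (fderiv ℝ (fderiv ℝ f) p)) p := by
  have h1 : HasFDerivAt (fderiv ℝ f) (fderiv ℝ (fderiv ℝ f) p) p :=
    (((hf.fderiv_right (m := 1) (WithTop.coe_le_coe.mpr le_top)).differentiable one_ne_zero) p).hasFDerivAt
  exact (ContinuousLinearMap.apply ℝ ℂ w).hasFDerivAt.comp p h1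

noncomputable def gen (a α c : ℂ) (f : ℝ×ℝ → ℂ) (q : ℝ×ℝ) : ℂ :=
  Complex.exp (a * q.2) *
    (α * ((Real.cos q.1 : ℝ) : ℂ) * pT f q
      + Complex.I * ((1 / Real.sin q.1 + Real.sin q.1 : ℝ) : ℂ) * pP f q
      + c * ((Real.sin q.1 : ℝ) : ℂ) * f q)

lemma pD_gen (a α c : ℂ) (f : ℝ×ℝ → ℂ) (hf : ContDiff ℝ (⊤ : ℕ∞) f) (p : ℝ×ℝ)
    (hp : Real.sin p.1 ≠ 0) (v : ℝ×ℝ) :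
    fderiv ℝ (gen a α c f) p v =
      a * (v.2 : ℂ) * gen a α c f p
      + Complex.exp (a * p.2) *
        ( α * (-(Real.sin p.1 : ℂ)) * (v.1 : ℂ) * pT f p
          + α * ((Real.cos p.1 : ℝ) : ℂ) * fderiv ℝ (fderiv ℝ f) p v (1,0)
          + Complex.I * ((-Real.cos p.1 / (Real.sin p.1)^2 + Real.cos p.1 : ℝ) : ℂ) * (v.1 : ℂ) * pP f p
          + Complex.I * ((1 / Real.sin p.1 + Real.sin p.1 : ℝ) : ℂ) * fderiv ℝ (fderiv ℝ f) p v (0,1)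
          + c * ((Real.cos p.1 : ℝ) : ℂ) * (v.1 : ℂ) * f p
          + c * ((Real.sin p.1 : ℝ) : ℂ) * fderiv ℝ f p v ) := by
  have hpT : HasFDerivAt (pT f)
      ((ContinuousLinearMap.apply ℝ ℂ ((1,0) : ℝ×ℝ)).comp (fderiv ℝ (fderiv ℝ f) p)) p :=
    hasF_pD f hf (1,0) p
  have hpP : HasFDerivAt (pP f)
      ((ContinuousLinearMap.apply ℝ ℂ ((0,1) : ℝ×ℝ)).comp (fderiv ℝ (fderiv ℝ f) p)) p :=
    hasF_pD f hf (0,1) p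
  have hfd : HasFDerivAt f (fderiv ℝ f p) p := (hf.differentiable (by simp) p).hasFDerivAt
  have h1 := ((hasF_cos p).const_mul α).mul hpT
  have h2 := ((hasF_cc p hp).const_mul Complex.I).mul hpP
  have h3 := ((hasF_sin p).const_mul c).mul hfd
  have H := (hasF_exp a p).mul ((h1.add h2).add h3)
  have hG : HasFDerivAt (gen a α c f) _ p := H
  rw [hG.fderiv]
  simp only [ContinuousLinearMap.add_apply, ContinuousLinearMap.smul_apply,
    ContinuousLinearMap.comp_apply, ContinuousLinearMap.apply_apply, pr1_apply, pr2_apply,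
    smul_eq_mul, gen, pT, pP, Pi.add_apply, Pi.mul_apply]
  push_cast
  ring

end Aux

set_option maxHeartbeats 2000000 in
theorem u11_commutator_I (s : ℝ) (f : ℝ × ℝ → ℂ) (hf : ContDiff ℝ (⊤ : ℕ∞) f)
    (p : ℝ × ℝ) (hp : Real.sin p.1 ≠ 0) :
    Iplus s (Iminus s f) p - Iminus s (Iplus s f) p
      = -8 * Iz f p + ((4 * s - 2 : ℝ) : ℂ) * f p := by
  have e1 : Iplus s f = gen Complex.I 1 ((s : ℂ) - 1) f := by
    funext q; simp only [Iplus, gen]; push_cast; ring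
  have e2 : Iminus s f = gen (-Complex.I) (-1) (s : ℂ) f := by
    funext q; simp only [Iminus, gen]; push_cast; ring
  have hsym : fderiv ℝ (fderiv ℝ f) p (1,0) (0,1) = fderiv ℝ (fderiv ℝ f) p (0,1) (1,0) :=
    (hf.contDiffAt.isSymmSndFDerivAt (by rw [minSmoothness_of_isRCLikeNormedField]; exact WithTop.coe_le_coe.mpr le_top)) (1,0) (0,1)
  rw [e1, e2]
  simp only [Iplus, Iminus, Iz, pT, pP]
  rw [pD_gen _ _ _ f hf p hp (1,0), pD_gen _ _ _ f hf p hp (0,1),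
    pD_gen _ _ _ f hf p hp (1,0), pD_gen _ _ _ f hf p hp (0,1)]
  simp only [gen, pT, pP]
  rw [hsym]
  have hE : Complex.exp (Complex.I * (p.2:ℂ)) * Complex.exp (-Complex.I * (p.2:ℂ)) = 1 := by
    rw [← Complex.exp_add]; ring_nf; exact Complex.exp_zero
  have hS : Complex.sin (p.1:ℂ) ≠ 0 := by
    rw [← Complex.ofReal_sin]; exact_mod_cast hp
  have hSi : Complex.sin (p.1:ℂ) * (Complex.sin (p.1:ℂ))⁻¹ = 1 := mul_inv_cancel₀ hS
  have hSC : Complex.sin (p.1:ℂ)^2 + Complex.cos (p.1:ℂ)^2 = 1 := Complex.sin_sq_add_cos_sq _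
  have hI : Complex.I * Complex.I = -1 := Complex.I_mul_I
  push_cast
  linear_combination ((-2:ℂ) * f p + (4:ℂ) * (s:ℂ) * f p + (8:ℂ) * Complex.I * fderiv ℝ f p (0,1)) * hE + ((-1:ℂ) * Complex.exp (Complex.I * (p.2:ℂ)) * Complex.exp (-Complex.I * (p.2:ℂ)) * f p + (2:ℂ) * Complex.exp (Complex.I * (p.2:ℂ)) * Complex.exp (-Complex.I * (p.2:ℂ)) * (s:ℂ) * f p + (6:ℂ) * Complex.exp (Complex.I * (p.2:ℂ)) * Complex.exp (-Complex.I * (p.2:ℂ)) * Complex.I * fderiv ℝ f p (0,1) + (2:ℂ) * Complex.exp (Complex.I * (p.2:ℂ)) * Complex.exp (-Complex.I * (p.2:ℂ)) * Complex.sin (p.1:ℂ) * (Complex.sin (p.1:ℂ))⁻¹ * Complex.I * fderiv ℝ f p (0,1)) * hSi + ((-1:ℂ) * Complex.exp (Complex.I * (p.2:ℂ)) * Complex.exp (-Complex.I * (p.2:ℂ)) * f p + (2:ℂ) * Complex.exp (Complex.I * (p.2:ℂ)) * Complex.exp (-Complex.I * (p.2:ℂ)) * (s:ℂ) * f p + (2:ℂ)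 * Complex.exp (Complex.I * (p.2:ℂ)) * Complex.exp (-Complex.I * (p.2:ℂ)) * Complex.I * fderiv ℝ f p (0,1) + (-2:ℂ) * Complex.exp (Complex.I * (p.2:ℂ)) * Complex.exp (-Complex.I * (p.2:ℂ)) * (Complex.sin (p.1:ℂ))⁻¹ * (Complex.sin (p.1:ℂ))⁻¹ * Complex.I * fderiv ℝ f p (0,1)) * hSC + ((-2:ℂ) * Complex.exp (Complex.I * (p.2:ℂ)) * Complex.exp (-Complex.I * (p.2:ℂ)) * (Complex.sin (p.1:ℂ))⁻¹ * (Complex.sin (p.1:ℂ))⁻¹ * Complex.I * fderiv ℝ f p (0,1) + (1:ℂ) * Complex.exp (Complex.I * (p.2:ℂ)) * Complex.exp (-Complex.I * (p.2:ℂ)) * Complex.sin (p.1:ℂ) * (Complex.sin (p.1:ℂ))⁻¹ * f p + (-2:ℂ) * Complex.exp (Complex.I * (p.2:ℂ)) * Complex.exp (-Complex.I * (p.2:ℂ)) * Complex.sin (p.1:ℂ) * (Complex.sin (p.1:ℂ))⁻¹ * (s:ℂ) * f p + (-4:ℂ) * Complex.exp (Complex.I * (p.2:ℂ)) * Complex.exp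 (-Complex.I * (p.2:ℂ)) * Complex.sin (p.1:ℂ) * (Complex.sin (p.1:ℂ))⁻¹ * Complex.I * fderiv ℝ f p (0,1) + (1:ℂ) * Complex.exp (Complex.I * (p.2:ℂ)) * Complex.exp (-Complex.I * (p.2:ℂ)) * Complex.sin (p.1:ℂ) * Complex.sin (p.1:ℂ) * f p + (-2:ℂ) * Complex.exp (Complex.I * (p.2:ℂ)) * Complex.exp (-Complex.I * (p.2:ℂ)) * Complex.sin (p.1:ℂ) * Complex.sin (p.1:ℂ) * (s:ℂ) * f p + (-2:ℂ) * Complex.exp (Complex.I * (p.2:ℂ)) * Complex.exp (-Complex.I * (p.2:ℂ)) * Complex.sin (p.1:ℂ) * Complex.sin (p.1:ℂ) * Complex.I * fderiv ℝ f p (0,1)) * hI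
end
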